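/- arXiv:2211.15821 — 2 statements merged into one kernel-verified Lean document; each statement's English description precedes it below -/
import Mathlib

section
/- Let A be a self-adjoint, positive definite operator on a complex Hilbert space H, and 0 ≤ α, β ≤ 1. The formal adjoint matrix ℳ(u,v,w) = (-v, Au - A^α w, A^α v - A^β w) with domain D(A) × D(A^α) × D(A^α) is dissipative on ℋ = D(A^{1/2}) × H × H: Re⟨ℳU, U⟩_ℋ = -‖A^{β/2} w‖² ≤ 0 for all U in the domain. -/
open scoped ComplexInnerProductSpace

/-- dissipativity of the formal adjoint matrix
ℳ(u,v,w) = (-v, Au - A^α w, A^α v - A^β w) on ℋ = D(A^{1/2}) × H × H. -/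
theorem stmt_1 {H : Type*} [NormedAddCommGroup H] [InnerProductSpace ℂ H] [CompleteSpace H]
    (α β : ℝ) (hα : α ∈ Set.Icc (0 : ℝ) 1) (hβ : β ∈ Set.Icc (0 : ℝ) 1)
    (A Ahalf Aα Aβ Aβ2 : H →ₗ[ℂ] H)
    (DA DAα : Submodule ℂ H)
    (hA_sa : ∀ x y : H, ⟪A x, y⟫ = ⟪x, A y⟫)
    (hAhalf_sa : ∀ x y : H, ⟪Ahalf x, y⟫ = ⟪x, Ahalf y⟫)
    (hAα_sa : ∀ x y : H, ⟪Aα x, y⟫ = ⟪x, Aα y⟫)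
    (hAβ2_sa : ∀ x y : H, ⟪Aβ2 x, y⟫ = ⟪x, Aβ2 y⟫)
    (hhalf : ∀ x : H, Ahalf (Ahalf x) = A x)
    (hbeta2 : ∀ x : H, Aβ2 (Aβ2 x) = Aβ x)
    (hpos : ∃ c > (0 : ℝ), ∀ x : H, c * ‖x‖ ^ 2 ≤ (⟪A x, x⟫).re) :
    ∀ u ∈ DA, ∀ v ∈ DAα, ∀ w ∈ DAα,
      (⟪Ahalf (-v), Ahalf u⟫ + ⟪A u - Aα w, v⟫ + ⟪Aα v - Aβ w, w⟫).re
          = -‖Aβ2 w‖ ^ 2 ∧ (-‖Aβ2 w‖ ^ 2 : ℝ) ≤ 0 := by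
  intro u hu v hv w hw
  refine ⟨?_, neg_nonpos.mpr (by positivity)⟩
  have h1 : ⟪Ahalf (-v), Ahalf u⟫ = -⟪v, A u⟫ := by
    rw [map_neg, inner_neg_left, hAhalf_sa, hhalf]
  have h2 : ⟪Aα v, w⟫ = ⟪v, Aα w⟫ := hAα_sa v w
  have h3 : ⟪Aβ w, w⟫ = (↑(‖Aβ2 w‖ ^ 2) : ℂ) := by
    rw [← hbeta2, hAβ2_sa, inner_self_eq_norm_sq_to_K]; norm_cast
  have h4 : (⟪A u, v⟫).re = (⟪v, A u⟫).re := by rw [← inner_conj_symm]; exact Complex.conj_re _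
  have h5 : (⟪Aα v, w⟫).re = (⟪Aα w, v⟫).re := by
    rw [h2]; rw [← inner_conj_symm]; exact Complex.conj_re _
  rw [inner_sub_left, inner_sub_left, h1, h3]
  simp only [Complex.add_re, Complex.sub_re, Complex.neg_re, Complex.ofReal_re, h4, h5]
  ring
end

section
/- Let A be a densely defined dissipative operator on a Hilbert space G × H₁ of the block form M = [[𝒜, B],[-B*, C]] with domain (D(𝒜) ∩ D(B*)) × (D(B) ∩ D(C)), where C is boundedly invertible, B ∈ L(D(C), G), and C^{-1}B* extends to a bounded operator. Then M is closable with closure having domain {(u,v) : u ∈ D(closure(𝒜 + BC^{-1}B*)), -C^{-1}B*u + v ∈ D(C)}, provided 𝒜 + BC^{-1}B* is closable. -/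
open scoped ComplexInnerProductSpace

/-!
Writing `T` for the bounded extension of `C⁻¹B*` and `R` for the bounded operator `BC⁻¹`,
the block operator factors as `M = [[I, R], [0, I]] · diag(S, C) · [[I, 0], [-T, I]]`.
The outer factors are bounded and boundedly invertible, so the graph of `M` is the image of
`graph S × graph C` under a linear homeomorphism. Taking closures therefore commutes with the
factorization: `closure M = [[I, R], [0, I]] · diag(closure S, C) · [[I, 0], [-T, I]]`, where
`C` is unchanged because an operator with a bounded inverse is closed. Reading off the domain of
the right-hand side gives the theorem.
-/

namespace Submodule

variable {𝕜 M N : Type*} [NormedField 𝕜] [NormedAddCommGroup M] [NormedSpace 𝕜 M]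
  [NormedAddCommGroup N] [NormedSpace 𝕜 N]

theorem topologicalClosure_map_continuousLinearEquiv (e : M ≃L[𝕜] N) (p : Submodule 𝕜 M) :
    (p.map (e : M →ₗ[𝕜] N)).topologicalClosure = p.topologicalClosure.map (e : M →ₗ[𝕜] N) :=
  SetLike.ext' <| by simpa using (e.toHomeomorph.image_closure (p : Set M)).symm

theorem topologicalClosure_prod (p : Submodule 𝕜 M) (q : Submodule 𝕜 N) :
    (p.prod q).topologicalClosure = p.topologicalClosure.prod q.topologicalClosure :=
  SetLike.ext' closure_prod_eq

end Submodule

section Operators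

variable {𝕜 E F : Type*} [NontriviallyNormedField 𝕜] [NormedAddCommGroup E] [NormedSpace 𝕜 E]
  [NormedAddCommGroup F] [NormedSpace 𝕜 F]

namespace LinearPMap

theorem IsClosed.closure_eq {f : E →ₗ.[𝕜] F} (hf : f.IsClosed) : f.closure = f :=
  eq_of_eq_graph <| by
    rw [← hf.isClosable.graph_closure_eq_closure_graph, hf.submodule_topologicalClosure_eq]

theorem isClosed_of_continuous_inverse (f : E →ₗ.[𝕜] F) (g : F →L[𝕜] E)
    (hg : ∀ y, g y ∈ f.domain) (hfg : ∀ y, f ⟨g y, hg y⟩ = y)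
    (hgf : ∀ x (hx : x ∈ f.domain), g (f ⟨x, hx⟩) = x) : f.IsClosed := by
  have hgraph : (f.graph : Set (E × F)) = {p | p.1 = g p.2} := by
    ext ⟨x, y⟩
    simp only [SetLike.mem_coe, mem_graph_iff, Set.mem_ofPred_eq]
    constructor
    · rintro ⟨⟨x, hx⟩, rfl, rfl⟩
      exact (hgf x hx).symm
    · rintro rfl
      exact ⟨⟨g y, hg y⟩, rfl, hfg y⟩
  rw [LinearPMap.IsClosed, hgraph]
  exact isClosed_eq continuous_fst (g.continuous.comp continuous_snd)

theorem exists_continuousLinearMap_eq_comp_inverse (B : F →ₗ.[𝕜] E) (C : F →ₗ.[𝕜] F)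
    (Cinv : F →L[𝕜] F) (hCmem : ∀ y, Cinv y ∈ C.domain) (hCright : ∀ y, C ⟨Cinv y, hCmem y⟩ = y)
    (hBC : ∀ v ∈ C.domain, v ∈ B.domain) (K : ℝ)
    (hBbdd : ∀ v (hv : v ∈ C.domain), ‖B ⟨v, hBC v hv⟩‖ ≤ K * (‖v‖ + ‖C ⟨v, hv⟩‖)) :
    ∃ R : F →L[𝕜] E, ∀ y, R y = B ⟨Cinv y, hBC _ (hCmem y)⟩ := by
  let BCinv := B.toFun.comp ((Cinv : F →ₗ[𝕜] F).codRestrict B.domain fun y => hBC _ (hCmem y))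
  refine ⟨BCinv.mkContinuous (max K 0 * (‖Cinv‖ + 1)) fun y => ?_, fun _ => rfl⟩
  calc ‖B ⟨Cinv y, _⟩‖ ≤ K * (‖Cinv y‖ + ‖C ⟨Cinv y, hCmem y⟩‖) := hBbdd _ _
    _ = K * (‖Cinv y‖ + ‖y‖) := by rw [hCright]
    _ ≤ max K 0 * (‖Cinv‖ * ‖y‖ + ‖y‖) :=
      mul_le_mul (le_max_left _ _) (by gcongr; exact Cinv.le_opNorm y) (by positivity)
        (le_max_right _ _)
    _ = max K 0 * (‖Cinv‖ + 1) * ‖y‖ := by ring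

end LinearPMap

/-- Maps `graph f × graph g` onto the graph of
`[[I, R], [0, I]] · diag(f, g) · [[I, 0], [-T, I]]`. -/
def blockGraphEquiv (T : E →L[𝕜] F) (R : F →L[𝕜] E) :
    ((E × E) × F × F) ≃L[𝕜] ((E × F) × E × F) where
  toFun x := ((x.1.1, x.2.1 + T x.1.1), (x.1.2 + R x.2.2, x.2.2))
  invFun y := ((y.1.1, y.2.1 - R y.2.2), (y.1.2 - T y.1.1, y.2.2))
  map_add' x y := by simp [add_add_add_comm]
  map_smul' c x := by simp
  left_inv x := by simp
  right_inv y := by simp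

@[simp]
theorem blockGraphEquiv_apply (T : E →L[𝕜] F) (R : F →L[𝕜] E) (u s : E) (w c : F) :
    blockGraphEquiv T R ((u, s), (w, c)) = ((u, w + T u), (s + R c, c)) := rfl

section BlockGraph

variable (T : E →L[𝕜] F) (R : F →L[𝕜] E) {f : E →ₗ.[𝕜] E} {g : F →ₗ.[𝕜] F}
  {M : (E × F) →ₗ.[𝕜] (E × F)}

theorem graph_eq_map_blockGraphEquiv_of_mem_graph
    (hdom : ∀ u v, (u, v) ∈ M.domain → u ∈ f.domain ∧ v - T u ∈ g.domain)
    (hmem : ∀ u (hu : u ∈ f.domain) w (hw : w ∈ g.domain),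
      ((u, w + T u), (f ⟨u, hu⟩ + R (g ⟨w, hw⟩), g ⟨w, hw⟩)) ∈ M.graph) :
    M.graph = (f.graph.prod g.graph).map (blockGraphEquiv T R : _ →ₗ[𝕜] _) := by
  ext ⟨⟨u, v⟩, y⟩
  constructor
  · intro hz
    obtain ⟨hu, hv⟩ := hdom u v (M.mem_domain_of_mem_graph hz)
    have hblock := hmem u hu (v - T u) hv
    rw [sub_add_cancel] at hblock
    obtain rfl := M.mem_graph_snd_inj hz hblock rfl
    exact ⟨((u, f ⟨u, hu⟩), (v - T u, g ⟨_, hv⟩)), ⟨f.mem_graph ⟨u, hu⟩, g.mem_graph ⟨_, hv⟩⟩,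
      by simp⟩
  · rintro ⟨⟨⟨u', s⟩, w, c⟩, ⟨hf, hg⟩, hz⟩
    obtain ⟨⟨u', hu⟩, rfl, rfl⟩ := f.mem_graph_iff.1 hf
    obtain ⟨⟨w, hw⟩, rfl, rfl⟩ := g.mem_graph_iff.1 hg
    rw [← hz]
    exact hmem u' hu w hw

theorem snd_eq_zero_of_mem_map_blockGraphEquiv {x : (E × F) × E × F}
    (hx : x ∈ (f.graph.prod g.graph).map (blockGraphEquiv T R : _ →ₗ[𝕜] _)) (h0 : x.1 = 0) :
    x.2 = 0 := by
  obtain ⟨⟨⟨u, s⟩, w, c⟩, ⟨hf, hg⟩, rfl⟩ := hx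
  obtain ⟨rfl, hw⟩ : u = 0 ∧ w + T u = 0 := by simpa using h0
  obtain rfl : w = 0 := by simpa using hw
  obtain rfl := f.graph_fst_eq_zero_snd hf rfl
  obtain rfl := g.graph_fst_eq_zero_snd hg rfl
  simp

theorem isClosable_of_graph_eq_map_blockGraphEquiv
    (hM : M.graph = (f.graph.prod g.graph).map (blockGraphEquiv T R : _ →ₗ[𝕜] _))
    (hf : f.IsClosable) (hg : g.IsClosable) :
    M.IsClosable ∧ M.closure.graph =
      (f.closure.graph.prod g.closure.graph).map (blockGraphEquiv T R : _ →ₗ[𝕜] _) := by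
  have hcl : M.graph.topologicalClosure
      = (f.closure.graph.prod g.closure.graph).map (blockGraphEquiv T R : _ →ₗ[𝕜] _) := by
    rw [hM, Submodule.topologicalClosure_map_continuousLinearEquiv,
      Submodule.topologicalClosure_prod, hf.graph_closure_eq_closure_graph,
      hg.graph_closure_eq_closure_graph]
  have hMcl : M.IsClosable := ⟨_, (Submodule.toLinearPMap_graph_eq _ fun x hx h0 =>
    snd_eq_zero_of_mem_map_blockGraphEquiv T R (hcl ▸ hx) h0).symm⟩
  exact ⟨hMcl, hMcl.graph_closure_eq_closure_graph ▸ hcl⟩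

theorem mem_domain_iff_of_graph_eq_map_blockGraphEquiv
    (hM : M.graph = (f.graph.prod g.graph).map (blockGraphEquiv T R : _ →ₗ[𝕜] _))
    {u : E} {v : F} : (u, v) ∈ M.domain ↔ u ∈ f.domain ∧ v - T u ∈ g.domain := by
  rw [LinearPMap.mem_domain_iff]
  simp_rw [hM]
  constructor
  · rintro ⟨y, ⟨⟨u', s⟩, w, c⟩, ⟨hf, hg⟩, hy⟩
    obtain ⟨⟨rfl, rfl⟩, -⟩ : (u' = u ∧ w + T u' = v) ∧ _ := by simpa using hy
    exact ⟨LinearPMap.mem_domain_of_mem_graph hf,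
      by simpa using LinearPMap.mem_domain_of_mem_graph hg⟩
  · rintro ⟨hu, hv⟩
    refine ⟨(f ⟨u, hu⟩ + R (g ⟨_, hv⟩), g ⟨_, hv⟩), ((u, f ⟨u, hu⟩), (v - T u, g ⟨_, hv⟩)),
      ⟨f.mem_graph ⟨u, hu⟩, g.mem_graph ⟨_, hv⟩⟩, ?_⟩
    simp

end BlockGraph

theorem graph_eq_map_blockGraphEquiv (𝒜 : E →ₗ.[𝕜] E) (B : F →ₗ.[𝕜] E) (Bstar : E →ₗ.[𝕜] F)
    (C : F →ₗ.[𝕜] F) (Cinv : F →L[𝕜] F) (hCmem : ∀ y, Cinv y ∈ C.domain)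
    (hCright : ∀ y, C ⟨Cinv y, hCmem y⟩ = y)
    (hCleft : ∀ v (hv : v ∈ C.domain), Cinv (C ⟨v, hv⟩) = v)
    (hBC : ∀ v ∈ C.domain, v ∈ B.domain)
    (T : E →L[𝕜] F) (hT : ∀ u (hu : u ∈ Bstar.domain), T u = Cinv (Bstar ⟨u, hu⟩))
    (R : F →L[𝕜] E) (hR : ∀ y, R y = B ⟨Cinv y, hBC _ (hCmem y)⟩)
    (M : (E × F) →ₗ.[𝕜] (E × F))
    (hMdom : M.domain = (𝒜.domain ⊓ Bstar.domain).prod (B.domain ⊓ C.domain))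
    (hM : ∀ (u : E) (v : F) (hu𝒜 : u ∈ 𝒜.domain) (huB : u ∈ Bstar.domain)
        (hvB : v ∈ B.domain) (hvC : v ∈ C.domain) (hx : (u, v) ∈ M.domain),
        M ⟨(u, v), hx⟩ = (𝒜 ⟨u, hu𝒜⟩ + B ⟨v, hvB⟩, -Bstar ⟨u, huB⟩ + C ⟨v, hvC⟩))
    (S : E →ₗ.[𝕜] E) (hSdom : S.domain = 𝒜.domain ⊓ Bstar.domain)
    (hS : ∀ u (hu𝒜 : u ∈ 𝒜.domain) (huB : u ∈ Bstar.domain) (hu : u ∈ S.domain),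
        S ⟨u, hu⟩ = 𝒜 ⟨u, hu𝒜⟩ + B ⟨Cinv (Bstar ⟨u, huB⟩), hBC _ (hCmem _)⟩) :
    M.graph = (S.graph.prod C.graph).map (blockGraphEquiv T R : _ →ₗ[𝕜] _) := by
  have hTmem : ∀ u (hu : u ∈ Bstar.domain), T u ∈ C.domain := fun u hu => hT u hu ▸ hCmem _
  refine graph_eq_map_blockGraphEquiv_of_mem_graph T R (fun u v hx => ?_) fun u hu m hm => ?_
  · rw [hMdom] at hx
    obtain ⟨hu, -, hvC⟩ := hx
    exact ⟨hSdom ▸ hu, sub_mem hvC (hTmem u hu.2)⟩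
  obtain ⟨hu𝒜, huB⟩ : u ∈ 𝒜.domain ⊓ Bstar.domain := hSdom ▸ hu
  have hTu := hTmem u huB
  have hmTu : m + T u ∈ C.domain := add_mem hm hTu
  have hx : (u, m + T u) ∈ M.domain := hMdom ▸ ⟨⟨hu𝒜, huB⟩, hBC _ hmTu, hmTu⟩
  have hCT : C ⟨T u, hTu⟩ = Bstar ⟨u, huB⟩ :=
    (congrArg C (Subtype.ext (hT u huB))).trans (hCright _)
  have hBT : B ⟨T u, hBC _ hTu⟩ = R (Bstar ⟨u, huB⟩) :=
    (congrArg B (Subtype.ext (hT u huB))).trans (hR _).symm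
  have hBm : B ⟨m, hBC _ hm⟩ = R (C ⟨m, hm⟩) :=
    (congrArg B (Subtype.ext (hCleft m hm).symm)).trans (hR _).symm
  have hBadd : B ⟨m + T u, hBC _ hmTu⟩ = B ⟨m, hBC _ hm⟩ + B ⟨T u, hBC _ hTu⟩ :=
    B.map_add ⟨m, hBC _ hm⟩ ⟨T u, hBC _ hTu⟩
  have hCadd : C ⟨m + T u, hmTu⟩ = C ⟨m, hm⟩ + C ⟨T u, hTu⟩ :=
    C.map_add ⟨m, hm⟩ ⟨T u, hTu⟩
  refine M.mem_graph_iff.2 ⟨⟨_, hx⟩, rfl, ?_⟩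
  rw [hM u _ hu𝒜 huB (hBC _ hmTu) hmTu hx, hS u hu𝒜 huB hu, ← hR, hBadd, hCadd, hBm, hBT, hCT]
  ext <;> dsimp only <;> abel

end Operators

theorem stmt_11_general {G H₁ : Type*}
    [NormedAddCommGroup G] [InnerProductSpace ℂ G]
    [NormedAddCommGroup H₁] [InnerProductSpace ℂ H₁]
    (𝒜 : G →ₗ.[ℂ] G) (B : H₁ →ₗ.[ℂ] G) (Bstar : G →ₗ.[ℂ] H₁) (C : H₁ →ₗ.[ℂ] H₁)
    -- C is boundedly invertible, with bounded inverse Cinv: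
    (Cinv : H₁ →L[ℂ] H₁)
    (hCmem : ∀ y : H₁, Cinv y ∈ C.domain)
    (hCright : ∀ y : H₁, C ⟨Cinv y, hCmem y⟩ = y)
    (hCleft : ∀ v (hv : v ∈ C.domain), Cinv (C ⟨v, hv⟩) = v)
    -- B ∈ L(D(C), G): D(C) ⊆ D(B) and B is bounded for the graph norm of D(C):
    (hBC : ∀ v ∈ C.domain, v ∈ B.domain)
    (K : ℝ)
    (hBbdd : ∀ v (hv : v ∈ C.domain), ‖B ⟨v, hBC v hv⟩‖ ≤ K * (‖v‖ + ‖C ⟨v, hv⟩‖))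
    -- C⁻¹ B* extends to a bounded linear operator T on G:
    (T : G →L[ℂ] H₁)
    (hT : ∀ u (hu : u ∈ Bstar.domain), T u = Cinv (Bstar ⟨u, hu⟩))
    -- the block operator matrix M = [[𝒜, B],[-B*, C]]:
    (M : (G × H₁) →ₗ.[ℂ] (G × H₁))
    (hMdom : M.domain = (𝒜.domain ⊓ Bstar.domain).prod (B.domain ⊓ C.domain))
    (hM : ∀ (u : G) (v : H₁) (hu𝒜 : u ∈ 𝒜.domain) (huB : u ∈ Bstar.domain)
        (hvB : v ∈ B.domain) (hvC : v ∈ C.domain) (hx : (u, v) ∈ M.domain),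
        M ⟨(u, v), hx⟩ = (𝒜 ⟨u, hu𝒜⟩ + B ⟨v, hvB⟩, -Bstar ⟨u, huB⟩ + C ⟨v, hvC⟩))
    -- S = 𝒜 + B C⁻¹ B*:
    (S : G →ₗ.[ℂ] G)
    (hSdom : S.domain = 𝒜.domain ⊓ Bstar.domain)
    (hS : ∀ u (hu𝒜 : u ∈ 𝒜.domain) (huB : u ∈ Bstar.domain) (hu : u ∈ S.domain),
        S ⟨u, hu⟩ = 𝒜 ⟨u, hu𝒜⟩
          + B ⟨Cinv (Bstar ⟨u, huB⟩), hBC _ (hCmem _)⟩)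
    -- provided 𝒜 + BC⁻¹B* is closable:
    (hScl : S.IsClosable) :
    M.IsClosable ∧
      ∀ (u : G) (v : H₁),
        (u, v) ∈ M.closure.domain ↔ u ∈ S.closure.domain ∧ v - T u ∈ C.domain := by
  obtain ⟨R, hR⟩ := B.exists_continuousLinearMap_eq_comp_inverse C Cinv hCmem hCright hBC K hBbdd
  have hgraph := graph_eq_map_blockGraphEquiv 𝒜 B Bstar C Cinv hCmem hCright hCleft hBC T hT R hR
    M hMdom hM S hSdom hS
  have hC : C.IsClosed := C.isClosed_of_continuous_inverse Cinv hCmem hCright hCleft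
  obtain ⟨hMcl, hMgraph⟩ := isClosable_of_graph_eq_map_blockGraphEquiv T R hgraph hScl hC.isClosable
  refine ⟨hMcl, fun u v => ?_⟩
  rw [mem_domain_iff_of_graph_eq_map_blockGraphEquiv T R hMgraph, hC.closure_eq]

/-- Atkinson–Langer–Mennicken–Shkalikov: for a densely defined dissipative
block operator M = [[𝒜, B],[-B*, C]] with domain (D(𝒜) ∩ D(B*)) × (D(B) ∩ D(C)), where C is
boundedly invertible, B ∈ L(D(C), G) and C⁻¹B* extends to a bounded operator T, M is closable
and, provided S = 𝒜 + BC⁻¹B* is closable, the domain of the closure of M is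
{(u,v) : u ∈ D(closure S), -C⁻¹B*u + v ∈ D(C)}. -/
theorem stmt_11 {G H₁ : Type*}
    [NormedAddCommGroup G] [InnerProductSpace ℂ G] [CompleteSpace G]
    [NormedAddCommGroup H₁] [InnerProductSpace ℂ H₁] [CompleteSpace H₁]
    (𝒜 : G →ₗ.[ℂ] G) (B : H₁ →ₗ.[ℂ] G) (Bstar : G →ₗ.[ℂ] H₁) (C : H₁ →ₗ.[ℂ] H₁)
    -- C is boundedly invertible, with bounded inverse Cinv:
    (Cinv : H₁ →L[ℂ] H₁)
    (hCmem : ∀ y : H₁, Cinv y ∈ C.domain)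
    (hCright : ∀ y : H₁, C ⟨Cinv y, hCmem y⟩ = y)
    (hCleft : ∀ v (hv : v ∈ C.domain), Cinv (C ⟨v, hv⟩) = v)
    -- B ∈ L(D(C), G): D(C) ⊆ D(B) and B is bounded for the graph norm of D(C):
    (hBC : ∀ v ∈ C.domain, v ∈ B.domain)
    (K : ℝ)
    (hBbdd : ∀ v (hv : v ∈ C.domain), ‖B ⟨v, hBC v hv⟩‖ ≤ K * (‖v‖ + ‖C ⟨v, hv⟩‖))
    -- C⁻¹ B* extends to a bounded linear operator T on G:
    (T : G →L[ℂ] H₁)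
    (hT : ∀ u (hu : u ∈ Bstar.domain), T u = Cinv (Bstar ⟨u, hu⟩))
    -- the block operator matrix M = [[𝒜, B],[-B*, C]]:
    (M : (G × H₁) →ₗ.[ℂ] (G × H₁))
    (hMdom : M.domain = (𝒜.domain ⊓ Bstar.domain).prod (B.domain ⊓ C.domain))
    (hM : ∀ (u : G) (v : H₁) (hu𝒜 : u ∈ 𝒜.domain) (huB : u ∈ Bstar.domain)
        (hvB : v ∈ B.domain) (hvC : v ∈ C.domain) (hx : (u, v) ∈ M.domain),
        M ⟨(u, v), hx⟩ = (𝒜 ⟨u, hu𝒜⟩ + B ⟨v, hvB⟩, -Bstar ⟨u, huB⟩ + C ⟨v, hvC⟩))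
    -- M is densely defined and dissipative:
    (hdense : Dense (M.domain : Set (G × H₁)))
    (hdissip : ∀ x : M.domain, (⟪(M x).1, (x : G × H₁).1⟫ + ⟪(M x).2, (x : G × H₁).2⟫).re ≤ 0)
    -- S = 𝒜 + B C⁻¹ B*:
    (S : G →ₗ.[ℂ] G)
    (hSdom : S.domain = 𝒜.domain ⊓ Bstar.domain)
    (hS : ∀ u (hu𝒜 : u ∈ 𝒜.domain) (huB : u ∈ Bstar.domain) (hu : u ∈ S.domain),
        S ⟨u, hu⟩ = 𝒜 ⟨u, hu𝒜⟩
          + B ⟨Cinv (Bstar ⟨u, huB⟩), hBC _ (hCmem _)⟩)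
    -- provided 𝒜 + BC⁻¹B* is closable:
    (hScl : S.IsClosable) :
    M.IsClosable ∧
      ∀ (u : G) (v : H₁),
        (u, v) ∈ M.closure.domain ↔ u ∈ S.closure.domain ∧ v - T u ∈ C.domain :=
  stmt_11_general 𝒜 B Bstar C Cinv hCmem hCright hCleft hBC K hBbdd T hT M hMdom hM S hSdom hS hScl
end
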